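/- arXiv:2407.13812 — 6 statements merged into one kernel-verified Lean document; each statement's English description precedes it below -/
import Mathlib

section
/- Let f be piecewise continuous of exponential order r, g(t) = ∫₀^t f(x) dx, φₙ(s) = ∫₀^∞ e^{-s t}(tⁿ/n!) f(t) dt and ψₙ(s) = ∫₀^∞ e^{-s t}(tⁿ/n!) g(t) dt. Then for s > max(r,0), ψₙ(s) = Σ_{k=0}^{n} φ_k(s)/s^{n-k+1}. -/
open MeasureTheory Real Finset

/-!
Writing `g` as an integral turns `ψₙ(s)` into a double integral over `0 < x ≤ t`. The
exponential bound on `f` makes it absolutely convergent, so the order of integration can be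
swapped, leaving `∫₀^∞ f(x) ∫ₓ^∞ e^{-st} tⁿ/n! dt dx`. The inner integral is
`e^{-sx} ∑_{k ≤ n} x^k / (k! s^{n-k+1})`: its derivative in `x` is `-e^{-sx} xⁿ/n!` and it
vanishes at infinity. Integrating this against `f` term by term gives `∑ₖ φₖ(s) / s^{n-k+1}`.
-/

open Filter Topology Set Asymptotics Function

lemma tendsto_pow_mul_exp_neg_mul_atTop_nhds_zero {c : ℝ} (hc : 0 < c) (k : ℕ) :
    Tendsto (fun t : ℝ => t ^ k * exp (-(c * t))) atTop (𝓝 0) := by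
  simpa [Real.rpow_natCast, neg_mul] using tendsto_rpow_mul_exp_neg_mul_atTop_nhds_zero k c hc

lemma exp_neg_mul_mul_exp_mul (s r t : ℝ) :
    exp (-(s * t)) * exp (r * t) = exp (-((s - r) * t)) := by
  rw [← exp_add]
  ring_nf

lemma integrableOn_Ioi_exp_neg_mul_mul_pow {c : ℝ} (hc : 0 < c) (k : ℕ) (a : ℝ) :
    IntegrableOn (fun t : ℝ => exp (-(c * t)) * t ^ k) (Ioi a) := by
  refine integrable_of_isBigO_exp_neg (half_pos hc) (by fun_prop) ?_
  have hbdd := (tendsto_pow_mul_exp_neg_mul_atTop_nhds_zero (half_pos hc) k).isBigO_one ℝ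
  refine (hbdd.mul (isBigO_refl (fun t : ℝ => exp (-(c / 2) * t)) atTop)).congr
    (fun t => ?_) (fun t => one_mul _)
  rw [mul_assoc, ← exp_add, mul_comm]
  ring_nf

noncomputable def laplaceTailPoly (s : ℝ) (n : ℕ) (x : ℝ) : ℝ :=
  ∑ k ∈ range (n + 1), x ^ k / k.factorial / s ^ (n - k + 1)

lemma hasDerivAt_laplaceTailPoly {s : ℝ} (hs : s ≠ 0) (n : ℕ) (x : ℝ) :
    HasDerivAt (laplaceTailPoly s n) (s * laplaceTailPoly s n x - x ^ n / n.factorial) x := by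
  have hshift : laplaceTailPoly s n =
      fun x => ∑ k ∈ range n, x ^ (k + 1) / (k + 1).factorial / s ^ (n - k) + 1 / s ^ (n + 1) := by
    funext x
    rw [laplaceTailPoly, sum_range_succ']
    simp only [pow_zero, Nat.factorial_zero, Nat.cast_one, div_one, Nat.sub_zero]
    congr 1
    refine sum_congr rfl fun k hk => ?_
    rw [show n - (k + 1) + 1 = n - k by have := mem_range.1 hk; omega]
  have hterm : ∀ k : ℕ, HasDerivAt (fun x : ℝ => x ^ (k + 1) / (k + 1).factorial)
      (x ^ k / k.factorial) x := by
    intro k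
    refine ((hasDerivAt_pow (k + 1) x).div_const _).congr_deriv ?_
    rw [Nat.add_sub_cancel, Nat.factorial_succ]
    push_cast
    field_simp
  have hval : s * laplaceTailPoly s n x - x ^ n / n.factorial =
      ∑ k ∈ range n, x ^ k / k.factorial / s ^ (n - k) := by
    rw [laplaceTailPoly, sum_range_succ, mul_add, Nat.sub_self, zero_add, pow_one,
      mul_div_cancel₀ _ hs, add_sub_cancel_right, mul_sum]
    refine sum_congr rfl fun k _ => ?_
    rw [pow_succ]
    field_simp
  rw [hval, hshift]
  exact (HasDerivAt.fun_sum fun k _ => (hterm k).div_const (s ^ (n - k))).add_const _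

lemma integral_Ioi_exp_neg_mul_mul_pow_div_factorial {s : ℝ} (hs : 0 < s) (n : ℕ) (x : ℝ) :
    ∫ t in Ioi x, exp (-(s * t)) * (t ^ n / n.factorial) =
      exp (-(s * x)) * laplaceTailPoly s n x := by
  have hderiv : ∀ t ∈ Ici x, HasDerivAt (fun t => -(exp (-(s * t)) * laplaceTailPoly s n t))
      (exp (-(s * t)) * (t ^ n / n.factorial)) t := by
    intro t _
    have hexp : HasDerivAt (fun t => exp (-(s * t))) (exp (-(s * t)) * -s) t := by
      simpa using ((hasDerivAt_id t).const_mul s).neg.exp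
    refine (hexp.fun_mul (hasDerivAt_laplaceTailPoly hs.ne' n t)).fun_neg.congr_deriv ?_
    ring
  have hint : IntegrableOn (fun t => exp (-(s * t)) * (t ^ n / n.factorial)) (Ioi x) := by
    simp_rw [← mul_div_assoc]
    exact (integrableOn_Ioi_exp_neg_mul_mul_pow hs n x).div_const _
  have hlim : Tendsto (fun t => -(exp (-(s * t)) * laplaceTailPoly s n t)) atTop (𝓝 0) := by
    have hterms := tendsto_finsetSum (range (n + 1)) fun k _ =>
      (tendsto_pow_mul_exp_neg_mul_atTop_nhds_zero hs k).div_const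
        ((k.factorial : ℝ) * s ^ (n - k + 1))
    simp only [zero_div, sum_const_zero] at hterms
    rw [← neg_zero]
    refine hterms.neg.congr fun t => ?_
    simp only [laplaceTailPoly, mul_sum, ← sum_neg_distrib]
    refine sum_congr rfl fun k _ => by ring
  rw [integral_Ioi_of_hasDerivAt_of_tendsto' hderiv hint hlim]
  ring

lemma integral_Ioi_mul_integral_Ioc_eq {w f G : ℝ → ℝ} {a : ℝ} (hw : Measurable w)
    (hf : Measurable f) (hf_loc : ∀ t > a, IntegrableOn f (Ioc a t))
    (hG : IntegrableOn G (Ioi a)) (hdom : ∀ t > a, ‖w t‖ * ∫ x in Ioc a t, ‖f x‖ ≤ G t) :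
    ∫ t in Ioi a, w t * ∫ x in Ioc a t, f x = ∫ x in Ioi a, (∫ t in Ioi x, w t) * f x := by
  set μ := volume.restrict (Ioi a)
  set K : ℝ → ℝ → ℝ := fun t x => w t * (Ioc a t).indicator f x
  have hK : uncurry K = {p : ℝ × ℝ | a < p.2 ∧ p.2 ≤ p.1}.indicator fun p => w p.1 * f p.2 := by
    ext ⟨t, x⟩
    simp [K, indicator_apply]
  have hK_meas : AEStronglyMeasurable (uncurry K) (μ.prod μ) := by
    rw [hK]
    refine (Measurable.indicator (by fun_prop) ?_).aestronglyMeasurable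
    exact (measurableSet_lt measurable_const measurable_snd).inter
      (measurableSet_le measurable_snd measurable_fst)
  have hIoc : ∀ (t : ℝ) (h : ℝ → ℝ), ∫ x, (Ioc a t).indicator h x ∂μ = ∫ x in Ioc a t, h x := by
    intro t h
    rw [setIntegral_indicator measurableSet_Ioc,
      inter_eq_self_of_subset_right Set.Ioc_subset_Ioi_self]
  have hK_int : Integrable (uncurry K) (μ.prod μ) := by
    refine (integrable_prod_iff hK_meas).2 ⟨?_, ?_⟩
    · filter_upwards [ae_restrict_mem measurableSet_Ioi] with t ht
      refine Integrable.const_mul ?_ (w t)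
      rw [integrable_indicator_iff measurableSet_Ioc, IntegrableOn,
        Measure.restrict_restrict measurableSet_Ioc,
        inter_eq_self_of_subset_left Set.Ioc_subset_Ioi_self]
      exact hf_loc t ht
    · refine hG.mono' hK_meas.norm.integral_prod_right' ?_
      filter_upwards [ae_restrict_mem measurableSet_Ioi] with t ht
      simp only [uncurry_apply_pair, K, norm_mul, norm_indicator_eq_indicator_norm]
      rw [integral_const_mul, hIoc, norm_mul, norm_norm,
        Real.norm_of_nonneg (setIntegral_nonneg measurableSet_Ioc fun _ _ => norm_nonneg _)]
      exact hdom t ht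
  calc ∫ t in Ioi a, w t * ∫ x in Ioc a t, f x = ∫ t, ∫ x, K t x ∂μ ∂μ := by
        simp only [μ, K, integral_const_mul, hIoc]
    _ = ∫ x, ∫ t, K t x ∂μ ∂μ := integral_integral_swap hK_int
    _ = ∫ x in Ioi a, (∫ t in Ioi x, w t) * f x := by
        refine setIntegral_congr_fun measurableSet_Ioi fun x hx => ?_
        have hK_x : (fun t => K t x) = (Ici x).indicator fun t => w t * f x := by
          ext t
          simp [K, indicator_apply, mem_Ioi.1 hx]
        rw [hK_x, setIntegral_indicator measurableSet_Ici,
          inter_eq_self_of_subset_right (Ici_subset_Ioi.2 hx),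
          integral_Ici_eq_integral_Ioi, integral_mul_const]

section ExponentialOrder

variable {f : ℝ → ℝ} {M r s : ℝ}

lemma integrableOn_Ioc_of_abs_le_mul_exp (hf : Measurable f)
    (hbound : ∀ t ≥ 0, |f t| ≤ M * exp (r * t)) (t : ℝ) : IntegrableOn f (Ioc 0 t) := by
  refine ((by fun_prop : Continuous fun x => M * exp (r * x)).integrableOn_Ioc).mono'
    hf.aestronglyMeasurable ?_
  filter_upwards [ae_restrict_mem measurableSet_Ioc] with x hx
  exact hbound x hx.1.le

lemma integral_Ioc_norm_le_of_abs_le_mul_exp (hbound : ∀ t ≥ 0, |f t| ≤ M * exp (r * t))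
    (hr : 0 ≤ r) {t : ℝ} (ht : 0 ≤ t) : ∫ x in Ioc 0 t, ‖f x‖ ≤ M * exp (r * t) * t := by
  have hM : 0 ≤ M := by simpa using (abs_nonneg _).trans (hbound 0 le_rfl)
  have hle : ∀ x ∈ Ioc 0 t, ‖‖f x‖‖ ≤ M * exp (r * t) := fun x hx =>
    calc ‖‖f x‖‖ = |f x| := by rw [norm_norm, Real.norm_eq_abs]
      _ ≤ M * exp (r * x) := hbound x hx.1.le
      _ ≤ M * exp (r * t) := by gcongr; exact hx.2
  calc ∫ x in Ioc 0 t, ‖f x‖ ≤ ‖∫ x in Ioc 0 t, ‖f x‖‖ := le_abs_self _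
    _ ≤ M * exp (r * t) * volume.real (Ioc 0 t) :=
      norm_setIntegral_le_of_norm_le_const measure_Ioc_lt_top hle
    _ = M * exp (r * t) * t := by rw [Real.volume_real_Ioc_of_le ht, sub_zero]

lemma integrableOn_Ioi_exp_neg_mul_pow_div_factorial_mul (hf : Measurable f)
    (hbound : ∀ t ≥ 0, |f t| ≤ M * exp (r * t)) (hrs : r < s) (k : ℕ) :
    IntegrableOn (fun t => exp (-(s * t)) * (t ^ k / k.factorial) * f t) (Ioi 0) := by
  refine (((integrableOn_Ioi_exp_neg_mul_mul_pow (sub_pos.2 hrs) k 0).const_mul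
    (M / k.factorial))).mono' (by fun_prop) ?_
  filter_upwards [ae_restrict_mem measurableSet_Ioi] with t (ht : 0 < t)
  calc ‖exp (-(s * t)) * (t ^ k / k.factorial) * f t‖
      = exp (-(s * t)) * (t ^ k / k.factorial) * |f t| := by
        rw [norm_mul, Real.norm_eq_abs, Real.norm_eq_abs, abs_of_nonneg (by positivity)]
    _ ≤ exp (-(s * t)) * (t ^ k / k.factorial) * (M * exp (r * t)) := by
        gcongr; exact hbound t ht.le
    _ = M / k.factorial * (exp (-((s - r) * t)) * t ^ k) := by
        rw [← exp_neg_mul_mul_exp_mul]; ring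

theorem integral_Ioi_exp_neg_mul_pow_div_factorial_mul_primitive (hf : Measurable f)
    (hr : 0 ≤ r) (hbound : ∀ t ≥ 0, |f t| ≤ M * exp (r * t)) (hrs : r < s) (n : ℕ) :
    ∫ t in Ioi 0, exp (-(s * t)) * (t ^ n / n.factorial) * ∫ x in (0 : ℝ)..t, f x =
      ∑ k ∈ range (n + 1),
        (∫ t in Ioi 0, exp (-(s * t)) * (t ^ k / k.factorial) * f t) / s ^ (n - k + 1) := by
  have hs : 0 < s := hr.trans_lt hrs
  have hdom : ∀ t > 0, ‖exp (-(s * t)) * (t ^ n / n.factorial)‖ * ∫ x in Ioc 0 t, ‖f x‖ ≤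
      M / n.factorial * (exp (-((s - r) * t)) * t ^ (n + 1)) := by
    intro t ht
    calc ‖exp (-(s * t)) * (t ^ n / n.factorial)‖ * ∫ x in Ioc 0 t, ‖f x‖
        ≤ exp (-(s * t)) * (t ^ n / n.factorial) * (M * exp (r * t) * t) := by
          rw [Real.norm_of_nonneg (by positivity)]
          gcongr
          exact integral_Ioc_norm_le_of_abs_le_mul_exp hbound hr ht.le
      _ = M / n.factorial * (exp (-((s - r) * t)) * t ^ (n + 1)) := by
          rw [← exp_neg_mul_mul_exp_mul]; ring
  calc ∫ t in Ioi 0, exp (-(s * t)) * (t ^ n / n.factorial) * ∫ x in (0 : ℝ)..t, f x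
      = ∫ t in Ioi 0, exp (-(s * t)) * (t ^ n / n.factorial) * ∫ x in Ioc 0 t, f x :=
        setIntegral_congr_fun measurableSet_Ioi fun t ht => by
          rw [intervalIntegral.integral_of_le (mem_Ioi.1 ht).le]
    _ = ∫ x in Ioi 0, (∫ t in Ioi x, exp (-(s * t)) * (t ^ n / n.factorial)) * f x :=
        integral_Ioi_mul_integral_Ioc_eq (by fun_prop) hf
          (fun t _ => integrableOn_Ioc_of_abs_le_mul_exp hf hbound t)
          ((integrableOn_Ioi_exp_neg_mul_mul_pow (sub_pos.2 hrs) (n + 1) 0).const_mul _) hdom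
    _ = ∫ x in Ioi 0, ∑ k ∈ range (n + 1),
          exp (-(s * x)) * (x ^ k / k.factorial) * f x / s ^ (n - k + 1) := by
        congr 1 with x
        rw [integral_Ioi_exp_neg_mul_mul_pow_div_factorial hs, laplaceTailPoly, mul_sum, sum_mul]
        exact sum_congr rfl fun k _ => by ring
    _ = _ := by
        rw [integral_finsetSum _ fun k _ =>
          (integrableOn_Ioi_exp_neg_mul_pow_div_factorial_mul hf hbound hrs k).div_const _]
        simp_rw [integral_div]

end ExponentialOrder

theorem laplace_type_of_antiderivative_general (f : ℝ → ℝ) (M r : ℝ)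
    (hf : Measurable f)
    (hbound : ∀ t ≥ (0:ℝ), |f t| ≤ M * Real.exp (r * t))
    (g : ℝ → ℝ) (hg : ∀ t, g t = ∫ x in (0:ℝ)..t, f x)
    (φ ψ : ℕ → ℝ → ℝ)
    (hφ : ∀ n s, φ n s = ∫ t in Set.Ioi (0:ℝ),
        Real.exp (-(s*t)) * (t ^ n / n.factorial) * f t)
    (hψ : ∀ n s, ψ n s = ∫ t in Set.Ioi (0:ℝ),
        Real.exp (-(s*t)) * (t ^ n / n.factorial) * g t) :
    ∀ s > max r 0, ∀ n : ℕ,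
      ψ n s = ∑ k ∈ range (n + 1), φ k s / s ^ (n - k + 1) := by
  intro s hs n
  have hM : 0 ≤ M := by simpa using (abs_nonneg _).trans (hbound 0 le_rfl)
  have hbound' : ∀ t ≥ (0:ℝ), |f t| ≤ M * exp (max r 0 * t) := fun t ht =>
    (hbound t ht).trans (by gcongr; exact le_max_left r 0)
  simp only [hψ, hφ, hg]
  exact integral_Ioi_exp_neg_mul_pow_div_factorial_mul_primitive hf (le_max_right r 0) hbound' hs n

theorem laplace_type_of_antiderivative (f : ℝ → ℝ) (M r : ℝ)
    (hf : Measurable f) (hM : 0 < M) (hr : 0 < r)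
    (hbound : ∀ t ≥ (0:ℝ), |f t| ≤ M * Real.exp (r * t))
    (g : ℝ → ℝ) (hg : ∀ t, g t = ∫ x in (0:ℝ)..t, f x)
    (φ ψ : ℕ → ℝ → ℝ)
    (hφ : ∀ n s, φ n s = ∫ t in Set.Ioi (0:ℝ),
        Real.exp (-(s*t)) * (t ^ n / n.factorial) * f t)
    (hψ : ∀ n s, ψ n s = ∫ t in Set.Ioi (0:ℝ),
        Real.exp (-(s*t)) * (t ^ n / n.factorial) * g t) :
    ∀ s > max r 0, ∀ n : ℕ,
      ψ n s = ∑ k ∈ range (n + 1), φ k s / s ^ (n - k + 1) :=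
  laplace_type_of_antiderivative_general f M r hf hbound g hg φ ψ hφ hψ
end

section
/- Let f, g be piecewise continuous of exponential order, with Laplace-type transforms φₙ(s) = ∫₀^∞ e^{-s t}(tⁿ/n!) f(t) dt and ψₙ(s) = ∫₀^∞ e^{-s t}(tⁿ/n!) g(t) dt. Then the Laplace-type transform of the convolution (f*g)(t) = ∫₀^t f(t-τ) g(τ) dτ satisfies ∫₀^∞ e^{-s t}(tⁿ/n!)(f*g)(t) dt = Σ_{k=0}^{n} φ_{n-k}(s) ψ_k(s). -/
/-!
Extend `f` and `g` by zero to the whole line: the finite convolution becomes an ordinary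
convolution on `ℝ`. At `t = τ + u` the binomial theorem splits the weight as
`e^{-st} tⁿ/n! = ∑ₖ (e^{-sτ} τᵏ/k!) (e^{-su} u^{n-k}/(n-k)!)`, so the weighted convolution is
a finite sum of convolutions of integrable functions, and the integral of a convolution is the
product of the integrals.
-/

open MeasureTheory Real Finset

open scoped Convolution

theorem pow_div_factorial_le_exp_mul_div_pow {b t : ℝ} (hb : 0 < b) (ht : 0 ≤ t) (k : ℕ) :
    t ^ k / k.factorial ≤ exp (b * t) / b ^ k := by
  rw [le_div_iff₀ (by positivity)]
  calc t ^ k / k.factorial * b ^ k = (b * t) ^ k / k.factorial := by ring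
    _ ≤ exp (b * t) := pow_div_factorial_le_exp _ (by positivity) k

theorem integrableOn_exp_neg_mul_pow_mul {h : ℝ → ℝ} {M r s : ℝ}
    (hh : AEStronglyMeasurable h (volume.restrict (Set.Ioi 0)))
    (hbd : ∀ t ≥ (0:ℝ), |h t| ≤ M * exp (r * t)) (hrs : r < s) (k : ℕ) :
    IntegrableOn (fun t => exp (-(s * t)) * (t ^ k / k.factorial) * h t) (Set.Ioi 0) := by
  -- half of the gap `s - r` absorbs `tᵏ`, the other half leaves an integrable majorant
  have hb : 0 < (s - r) / 2 := by linarith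
  refine Integrable.mono' ((exp_neg_integrableOn_Ioi 0 hb).const_mul (M / ((s - r) / 2) ^ k))
    (by fun_prop) ?_
  filter_upwards [ae_restrict_mem measurableSet_Ioi] with t (ht : 0 < t)
  calc ‖exp (-(s * t)) * (t ^ k / k.factorial) * h t‖
        = exp (-(s * t)) * (t ^ k / k.factorial) * |h t| := by
        rw [norm_mul, Real.norm_of_nonneg (by positivity), Real.norm_eq_abs]
    _ ≤ exp (-(s * t)) * (exp ((s - r) / 2 * t) / ((s - r) / 2) ^ k) * (M * exp (r * t)) := by
        gcongr exp (-(s * t)) * ?_ * ?_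
        · exact pow_div_factorial_le_exp_mul_div_pow hb ht.le k
        · exact hbd t ht.le
    _ = M / ((s - r) / 2) ^ k * exp (-((s - r) / 2) * t) := by
        rw [show -((s - r) / 2) * t = -(s * t) + (s - r) / 2 * t + r * t by ring, exp_add, exp_add]
        ring

theorem integral_mul_indicator {α : Type*} [MeasurableSpace α] {μ : Measure α} {s : Set α}
    (hs : MeasurableSet s) (k h : α → ℝ) :
    ∫ x, k x * s.indicator h x ∂μ = ∫ x in s, k x * h x ∂μ := by
  simp_rw [← Set.indicator_mul_right, integral_indicator hs]

theorem integrable_mul_indicator_iff {α : Type*} [MeasurableSpace α] {μ : Measure α} {s : Set α}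
    (hs : MeasurableSet s) (k h : α → ℝ) :
    Integrable (fun x => k x * s.indicator h x) μ ↔ IntegrableOn (fun x => k x * h x) s μ := by
  simp_rw [← Set.indicator_mul_right, integrable_indicator_iff hs]

theorem exp_neg_mul_pow_div_factorial_add (s x y : ℝ) (n : ℕ) :
    exp (-(s * (x + y))) * ((x + y) ^ n / n.factorial)
      = ∑ k ∈ range (n + 1),
          exp (-(s * x)) * (x ^ k / k.factorial) *
            (exp (-(s * y)) * (y ^ (n - k) / (n - k).factorial)) := by
  rw [add_pow, sum_div, mul_sum]
  refine sum_congr rfl fun k hk => ?_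
  have hfac : (n.choose k : ℝ) * k.factorial * (n - k).factorial = n.factorial := by
    exact_mod_cast Nat.choose_mul_factorial_mul_factorial (Nat.lt_succ_iff.mp (mem_range.mp hk))
  rw [mul_add, neg_add, exp_add]
  field_simp
  linear_combination (x ^ k * y ^ (n - k)) * hfac

open ContinuousLinearMap in
theorem integral_mul_convolution_eq_sum {G ι : Type*} [AddCommGroup G] [MeasurableSpace G]
    [MeasurableAdd₂ G] [MeasurableNeg G] {μ : Measure G} [SFinite μ] [μ.IsAddRightInvariant]
    (s : Finset ι) {K : G → ℝ} {a b : ι → G → ℝ} (hK : ∀ x y, K (x + y) = ∑ i ∈ s, a i x * b i y)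
    {f g : G → ℝ} (hf : ∀ i ∈ s, Integrable (fun x => a i x * f x) μ)
    (hg : ∀ i ∈ s, Integrable (fun y => b i y * g y) μ) :
    ∫ t, K t * (f ⋆[lsmul ℝ ℝ, μ] g) t ∂μ
      = ∑ i ∈ s, (∫ x, a i x * f x ∂μ) * ∫ y, b i y * g y ∂μ := by
  have hexp : ∀ᵐ t ∂μ, K t * (f ⋆[lsmul ℝ ℝ, μ] g) t
      = ∑ i ∈ s, ((fun x => a i x * f x) ⋆[lsmul ℝ ℝ, μ] (fun y => b i y * g y)) t := by
    filter_upwards [(Filter.eventually_all_finset s).2 fun i hi =>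
      (hf i hi).ae_convolution_exists (lsmul ℝ ℝ) (hg i hi)] with t ht
    calc K t * (f ⋆[lsmul ℝ ℝ, μ] g) t
        = ∫ x, ∑ i ∈ s, a i x * f x * (b i (t - x) * g (t - x)) ∂μ := by
          rw [convolution_def, ← integral_const_mul]
          refine integral_congr_ae (Filter.Eventually.of_forall fun x => ?_)
          simp only [lsmul_apply, smul_eq_mul]
          rw [← add_sub_cancel x t, hK, add_sub_cancel_left, sum_mul]
          exact sum_congr rfl fun i _ => by ring
      _ = _ := integral_finsetSum s ht
  rw [integral_congr_ae hexp,
    integral_finsetSum s fun i hi => (hf i hi).integrable_convolution _ (hg i hi)]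
  exact sum_congr rfl fun i hi => integral_convolution _ (hf i hi) (hg i hi)

theorem indicator_Ioi_convolution_indicator_Ioi (f g : ℝ → ℝ) :
    (Set.Ioi 0).indicator f ⋆ (Set.Ioi 0).indicator g
      = (Set.Ioi 0).indicator fun t => ∫ τ in (0:ℝ)..t, f τ * g (t - τ) := by
  ext t
  have hsupp : (fun τ => (Set.Ioi 0).indicator f τ • (Set.Ioi 0).indicator g (t - τ))
      = (Set.Ioo 0 t).indicator fun τ => f τ * g (t - τ) := by
    ext τ
    by_cases h1 : 0 < τ <;> by_cases h2 : τ < t <;> simp [h1, h2]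
  rw [convolution_def]
  simp only [ContinuousLinearMap.lsmul_apply]
  rw [hsupp, integral_indicator measurableSet_Ioo]
  rcases le_or_gt t 0 with ht | ht
  · rw [Set.Ioo_eq_empty_of_le ht, Set.indicator_of_notMem (Set.notMem_Ioi.2 ht),
      Measure.restrict_empty, integral_zero_measure]
  · rw [Set.indicator_of_mem (Set.mem_Ioi.2 ht), intervalIntegral.integral_of_le ht.le,
      integral_Ioc_eq_integral_Ioo]

theorem laplace_type_of_convolution_general (f g : ℝ → ℝ) (M r : ℝ)
    (hf : Measurable f) (hg : Measurable g)
    (hfb : ∀ t ≥ (0:ℝ), |f t| ≤ M * Real.exp (r * t))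
    (hgb : ∀ t ≥ (0:ℝ), |g t| ≤ M * Real.exp (r * t))
    (φ ψ : ℕ → ℝ → ℝ)
    (hφ : ∀ n s, φ n s = ∫ t in Set.Ioi (0:ℝ),
        Real.exp (-(s*t)) * (t ^ n / n.factorial) * f t)
    (hψ : ∀ n s, ψ n s = ∫ t in Set.Ioi (0:ℝ),
        Real.exp (-(s*t)) * (t ^ n / n.factorial) * g t) :
    ∀ s > r, ∀ n : ℕ,
      (∫ t in Set.Ioi (0:ℝ), Real.exp (-(s*t)) * (t ^ n / n.factorial) *
          (∫ τ in (0:ℝ)..t, f (t - τ) * g τ))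
        = ∑ k ∈ range (n + 1), φ (n - k) s * ψ k s := by
  intro s hs n
  have hint : ∀ {h : ℝ → ℝ}, Measurable h → (∀ t ≥ (0:ℝ), |h t| ≤ M * exp (r * t)) → ∀ k : ℕ,
      Integrable fun x => exp (-(s * x)) * (x ^ k / k.factorial) * (Set.Ioi 0).indicator h x :=
    fun hh hbd k => (integrable_mul_indicator_iff measurableSet_Ioi _ _).2
      (integrableOn_exp_neg_mul_pow_mul hh.aestronglyMeasurable hbd hs k)
  calc _ = ∫ t, exp (-(s * t)) * (t ^ n / n.factorial) *
        ((Set.Ioi 0).indicator g ⋆ (Set.Ioi 0).indicator f) t := by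
        simp_rw [indicator_Ioi_convolution_indicator_Ioi, integral_mul_indicator measurableSet_Ioi,
          mul_comm (f _) (g _)]
    _ = ∑ k ∈ range (n + 1),
          (∫ x, exp (-(s * x)) * (x ^ k / k.factorial) * (Set.Ioi 0).indicator g x) *
          ∫ y, exp (-(s * y)) * (y ^ (n - k) / (n - k).factorial) * (Set.Ioi 0).indicator f y :=
        integral_mul_convolution_eq_sum _ (exp_neg_mul_pow_div_factorial_add s · · n)
          (fun k _ => hint hg hgb k) (fun k _ => hint hf hfb (n - k))
    _ = _ := by
        simp_rw [integral_mul_indicator measurableSet_Ioi, hφ, hψ, mul_comm]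

theorem laplace_type_of_convolution (f g : ℝ → ℝ) (M r : ℝ)
    (hf : Measurable f) (hg : Measurable g) (hM : 0 < M) (hr : 0 < r)
    (hfb : ∀ t ≥ (0:ℝ), |f t| ≤ M * Real.exp (r * t))
    (hgb : ∀ t ≥ (0:ℝ), |g t| ≤ M * Real.exp (r * t))
    (φ ψ : ℕ → ℝ → ℝ)
    (hφ : ∀ n s, φ n s = ∫ t in Set.Ioi (0:ℝ),
        Real.exp (-(s*t)) * (t ^ n / n.factorial) * f t)
    (hψ : ∀ n s, ψ n s = ∫ t in Set.Ioi (0:ℝ),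
        Real.exp (-(s*t)) * (t ^ n / n.factorial) * g t) :
    ∀ s > r, ∀ n : ℕ,
      (∫ t in Set.Ioi (0:ℝ), Real.exp (-(s*t)) * (t ^ n / n.factorial) *
          (∫ τ in (0:ℝ)..t, f (t - τ) * g τ))
        = ∑ k ∈ range (n + 1), φ (n - k) s * ψ k s :=
  laplace_type_of_convolution_general f g M r hf hg hfb hgb φ ψ hφ hψ
end

section
/- Let f be of exponential order, φₙ(s) = ∫₀^∞ e^{-s x}(xⁿ/n!) f(x) dx, and aₙ(s) = (-1)ⁿ ∫₀^∞ e^{-s x} f(x) √s · Lₙ(s x) dx the Laguerre–Fourier coefficients of f. Then aₙ(s) = Σ_{k=0}^{n} (-1)^{n-k} C(n,k) s^{k+1/2} φ_k(s). -/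
open MeasureTheory Real Finset

/-- The classical Laguerre polynomial. -/
noncomputable def laguerre (n : ℕ) (x : ℝ) : ℝ :=
  ∑ k ∈ range (n + 1), (-1:ℝ) ^ k * (n.choose k : ℝ) * x ^ k / k.factorial

/-!
Expanding `Lₙ(s x)` into monomials `(-1)^k C(n,k) s^k x^k / k!` and integrating term by term turns
the Laguerre coefficient into a signed binomial combination of the moments `φ_k(s)`. Term-by-term
integration is legitimate because `|f x| ≤ M e^{r x}` makes each `e^{-s x} x^k f x` dominated by
`M x^k e^{-(s - r) x}`, which is integrable on `(0, ∞)` for `s > r`.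
-/

theorem laguerre_mul_eq_sum (n : ℕ) (s x : ℝ) :
    laguerre n (s * x) =
      ∑ k ∈ range (n + 1), (-1:ℝ) ^ k * (n.choose k : ℝ) * s ^ k * (x ^ k / k.factorial) := by
  unfold laguerre
  refine sum_congr rfl fun k _ => ?_
  rw [mul_pow]
  ring

theorem integral_mul_laguerre {μ : Measure ℝ} {g : ℝ → ℝ} (n : ℕ) (s : ℝ)
    (hg : ∀ k, Integrable (fun x => x ^ k * g x) μ) :
    ∫ x, g x * laguerre n (s * x) ∂μ =
      ∑ k ∈ range (n + 1),
        (-1:ℝ) ^ k * (n.choose k : ℝ) * s ^ k * ∫ x, x ^ k / k.factorial * g x ∂μ := by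
  have hg' : ∀ k, Integrable (fun x => x ^ k / k.factorial * g x) μ := fun k =>
    ((hg k).div_const (k.factorial : ℝ)).congr (.of_forall fun x => by ring)
  have hexpand : (fun x => g x * laguerre n (s * x)) = fun x => ∑ k ∈ range (n + 1),
      (-1:ℝ) ^ k * (n.choose k : ℝ) * s ^ k * (x ^ k / k.factorial * g x) := by
    funext x
    rw [laguerre_mul_eq_sum, mul_sum]
    exact sum_congr rfl fun k _ => by ring
  rw [hexpand, integral_finsetSum _ fun k _ => (hg' k).const_mul _]
  exact sum_congr rfl fun k _ => integral_const_mul _ _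

theorem integrableOn_pow_mul_exp_neg_mul_of_abs_le_exp {f : ℝ → ℝ} {M r s : ℝ}
    (hf : AEStronglyMeasurable f (volume.restrict (Set.Ioi 0)))
    (hbound : ∀ x > 0, |f x| ≤ M * exp (r * x)) (hs : r < s) (k : ℕ) :
    IntegrableOn (fun x => x ^ k * (exp (-(s * x)) * f x)) (Set.Ioi 0) := by
  have hmaj : IntegrableOn (fun x : ℝ => M * (x ^ (k:ℝ) * exp (-(s - r) * x ^ (1:ℝ))))
      (Set.Ioi 0) :=
    (integrableOn_rpow_mul_exp_neg_mul_rpow (by linarith [k.cast_nonneg (α := ℝ)]) one_pos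
      (sub_pos.2 hs)).const_mul M
  refine hmaj.mono' (by fun_prop) ((ae_restrict_iff' measurableSet_Ioi).2 (.of_forall ?_))
  intro x (hx : 0 < x)
  calc ‖x ^ k * (exp (-(s * x)) * f x)‖ = x ^ k * exp (-(s * x)) * |f x| := by
        rw [norm_eq_abs, abs_mul, abs_mul, abs_of_pos (pow_pos hx k), abs_of_pos (exp_pos _),
          mul_assoc]
    _ ≤ x ^ k * exp (-(s * x)) * (M * exp (r * x)) := by gcongr; exact hbound x hx
    _ = M * (x ^ (k:ℝ) * exp (-(s - r) * x ^ (1:ℝ))) := by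
        rw [rpow_one, rpow_natCast, show -(s - r) * x = -(s * x) + r * x by ring, exp_add]
        ring

theorem laguerre_coeff_eq_sum_laplace_type_general (f : ℝ → ℝ) (M r : ℝ)
    (hf : Measurable f)
    (hbound : ∀ x ≥ (0:ℝ), |f x| ≤ M * Real.exp (r * x))
    (φ a : ℕ → ℝ → ℝ)
    (hφ : ∀ n s, φ n s = ∫ x in Set.Ioi (0:ℝ),
        Real.exp (-(s*x)) * (x ^ n / n.factorial) * f x)
    (ha : ∀ n s, a n s = (-1:ℝ) ^ n * ∫ x in Set.Ioi (0:ℝ),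
        Real.exp (-(s*x)) * f x * (Real.sqrt s * laguerre n (s * x))) :
    ∀ s > r, ∀ n : ℕ,
      a n s = ∑ k ∈ range (n + 1),
        (-1:ℝ) ^ (n - k) * (n.choose k : ℝ) * s ^ k * Real.sqrt s * φ k s := by
  intro s hs n
  have hmoments := integrableOn_pow_mul_exp_neg_mul_of_abs_le_exp hf.aestronglyMeasurable
    (fun x hx => hbound x hx.le) hs
  have hφ' : ∀ k, φ k s = ∫ x in Set.Ioi 0, x ^ k / k.factorial * (exp (-(s * x)) * f x) :=
    fun k => by rw [hφ]; congr 1 with x; ring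
  have ha' : a n s = (-1:ℝ) ^ n * √s *
      ∫ x in Set.Ioi 0, exp (-(s * x)) * f x * laguerre n (s * x) := by
    rw [ha, mul_assoc, ← integral_const_mul √s]; congr 2; funext x; ring
  rw [ha', integral_mul_laguerre n s hmoments, mul_sum]
  refine sum_congr rfl fun k hk => ?_
  have hsign : (-1:ℝ) ^ n * (-1) ^ k = (-1) ^ (n - k) := by
    rw [← Nat.sub_add_cancel (mem_range_succ_iff.1 hk), pow_add, mul_assoc, ← pow_add,
      Even.neg_one_pow ⟨k, rfl⟩, mul_one, Nat.add_sub_cancel]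
  rw [hφ', ← hsign]
  ring

theorem laguerre_coeff_eq_sum_laplace_type (f : ℝ → ℝ) (M r : ℝ)
    (hf : Measurable f) (hM : 0 < M) (hr : 0 < r)
    (hbound : ∀ x ≥ (0:ℝ), |f x| ≤ M * Real.exp (r * x))
    (φ a : ℕ → ℝ → ℝ)
    (hφ : ∀ n s, φ n s = ∫ x in Set.Ioi (0:ℝ),
        Real.exp (-(s*x)) * (x ^ n / n.factorial) * f x)
    (ha : ∀ n s, a n s = (-1:ℝ) ^ n * ∫ x in Set.Ioi (0:ℝ),
        Real.exp (-(s*x)) * f x * (Real.sqrt s * laguerre n (s * x))) :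
    ∀ s > r, ∀ n : ℕ,
      a n s = ∑ k ∈ range (n + 1),
        (-1:ℝ) ^ (n - k) * (n.choose k : ℝ) * s ^ k * Real.sqrt s * φ k s :=
  laguerre_coeff_eq_sum_laplace_type_general f M r hf hbound φ a hφ ha
end

section
/- Let f be of exponential order r and φₙ(s) = ∫₀^∞ e^{-s x}(xⁿ/n!) f(x) dx. Then for s > 2r, for every k, the k-th forward difference at n = 0 of the sequence n ↦ sⁿ φₙ(s) satisfies Δ^k(sⁿφₙ(s))|_{n=0} = Σ_{j=0}^{k} (-1)^{k-j} C(k,j) s^j φ_j(s) = a_k(s)/√s, and consequently Σ_{k=0}^∞ (Δ^k(sⁿφₙ(s))|_{n=0})² ≤ (1/s)∫₀^∞ e^{-s x}|f(x)|² dx < ∞. -/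
open MeasureTheory Real Finset

/-- Forward difference operator on sequences. -/
def fwd (g : ℕ → ℝ) : ℕ → ℝ := fun n => g (n + 1) - g n

/-!
Newton's formula writes `Δᵏ(sⁿφₙ(s))|ₙ₌₀` as an alternating binomial sum of the `sʲφⱼ(s)`, and
expanding `L_k(sx)` into monomials identifies that sum with `(-1)ᵏ ∫ e^{-sx} f(x) L_k(sx) dx`,
that is with `a_k(s)/√s`.

For the bound, put the weight into the functions: `e^{-sx/2} f` lies in `L²(0,∞)` because
`s > 2r`, and the functions `(-1)ᵏ √s e^{-sx/2} L_k(sx)` are orthonormal there. After the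
substitution `t = sx` this is the Laguerre orthogonality `∫ e^{-t} L_m L_n = δ_{mn}`, which comes
down to the identities `∑ᵢ (-1)ⁱ C(n,i) C(i+j,j) = (-1)ⁿ C(j,n)` and
`∑ᵢ (-1)ⁱ C(m,i) C(i,n) = (-1)ᵐ δ_{mn}`; both sides are forward differences of binomial
coefficients. Bessel's inequality then bounds `∑ a_k(s)²`.
-/

open Set

theorem fwd_eq_fwdDiff : fwd = fwdDiff 1 := rfl

theorem fwd_iterate_apply_zero (g : ℕ → ℝ) (k : ℕ) :
    fwd^[k] g 0 = ∑ j ∈ range (k + 1), (-1 : ℝ) ^ (k - j) * k.choose j * g j := by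
  rw [fwd_eq_fwdDiff, fwdDiff_iter_eq_sum_shift]
  refine sum_congr rfl fun j _ => ?_
  simp

theorem sum_neg_one_pow_mul_choose_mul {R : Type*} [CommRing R] (g : ℕ → R) (n : ℕ) :
    ∑ i ∈ range (n + 1), (-1) ^ i * n.choose i * g i = (-1) ^ n * (fwdDiff 1)^[n] g 0 := by
  rw [fwdDiff_iter_eq_sum_shift, mul_sum]
  refine sum_congr rfl fun i hi => ?_
  have hin : i ≤ n := Nat.lt_succ_iff.mp (mem_range.mp hi)
  have hsign : (-1 : R) ^ n * (-1) ^ (n - i) = (-1) ^ i := by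
    rw [← pow_add, show n + (n - i) = 2 * (n - i) + i by omega, pow_add, pow_mul]
    simp
  simp only [zero_add, smul_eq_mul, mul_one, Int.cast_mul, Int.cast_pow, Int.cast_neg,
    Int.cast_one, Int.cast_natCast, zsmul_eq_mul]
  rw [← hsign]
  ring

theorem fwdDiff_iter_choose_apply_self (n j : ℕ) :
    (fwdDiff 1)^[n] (fun x ↦ x.choose j : ℕ → ℤ) j = j.choose n := by
  rcases le_or_gt n j with hnj | hjn
  · obtain ⟨d, rfl⟩ := Nat.exists_eq_add_of_le hnj
    rw [fwdDiff_iter_choose d n, Nat.choose_symm_add]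
  · obtain ⟨e, rfl⟩ := Nat.exists_eq_add_of_lt hjn
    have hj := fwdDiff_iter_choose 0 j
    rw [add_zero] at hj
    rw [Nat.choose_eq_zero_of_lt (by omega), show j + e + 1 = e + (1 + j) by ring,
      Function.iterate_add_apply, Function.iterate_add_apply, hj]
    simp [fwdDiff_iter_eq_sum_shift]

theorem sum_neg_one_pow_mul_choose_mul_choose_add (n j : ℕ) :
    ∑ i ∈ range (n + 1), (-1 : ℤ) ^ i * n.choose i * (i + j).choose j = (-1) ^ n * j.choose n := by
  have hshift := fwdDiff_iter_comp_add 1 (fun x ↦ (x.choose j : ℤ)) j n 0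
  rw [sum_neg_one_pow_mul_choose_mul (fun i ↦ ((i + j).choose j : ℤ)), hshift, zero_add,
    fwdDiff_iter_choose_apply_self]

theorem sum_neg_one_pow_mul_choose_mul_choose (m n : ℕ) :
    ∑ i ∈ range (m + 1), (-1 : ℤ) ^ i * m.choose i * i.choose n
      = if m = n then (-1) ^ m else 0 := by
  rw [sum_neg_one_pow_mul_choose_mul (fun i ↦ (i.choose n : ℤ)), fwdDiff_iter_choose_zero]
  split_ifs with h <;> simp [h]

theorem summable_and_tsum_sq_integral_mul_le {α ι : Type*} [MeasurableSpace α] {μ : Measure α}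
    [DecidableEq ι] {F : α → ℝ} {u : ι → α → ℝ} (hF : MemLp F 2 μ) (hu : ∀ k, MemLp (u k) 2 μ)
    (horth : ∀ k l, ∫ x, u k x * u l x ∂μ = if k = l then 1 else 0) :
    Summable (fun k ↦ (∫ x, u k x * F x ∂μ) ^ 2) ∧
      ∑' k, (∫ x, u k x * F x ∂μ) ^ 2 ≤ ∫ x, F x ^ 2 ∂μ := by
  have inner_toLp : ∀ {g h : α → ℝ} (hg : MemLp g 2 μ) (hh : MemLp h 2 μ),
      inner ℝ hg.toLp hh.toLp = ∫ x, g x * h x ∂μ := fun hg hh ↦ by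
    rw [L2.inner_def]
    refine integral_congr_ae ?_
    filter_upwards [hg.coeFn_toLp, hh.coeFn_toLp] with x hgx hhx
    rw [Real.inner_apply, hgx, hhx]
  have hv : Orthonormal ℝ fun k ↦ (hu k).toLp :=
    orthonormal_iff_ite.mpr fun k l ↦ (inner_toLp (hu k) (hu l)).trans (horth k l)
  have hnorm : ‖hF.toLp‖ ^ 2 = ∫ x, F x ^ 2 ∂μ := by
    rw [← real_inner_self_eq_norm_sq, inner_toLp hF hF]
    simp_rw [sq]
  simp_rw [← inner_toLp (hu _) hF, ← hnorm, ← sq_abs (inner ℝ _ _), ← Real.norm_eq_abs]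
  exact ⟨hv.inner_products_summable _, hv.tsum_inner_products_le _⟩

theorem integrableOn_exp_neg_mul_pow {c : ℝ} (hc : 0 < c) (n : ℕ) :
    IntegrableOn (fun x ↦ exp (-(c * x)) * x ^ n) (Ioi 0) := by
  have h := integrableOn_rpow_mul_exp_neg_mul_rpow (s := n) (p := 1)
    (neg_one_lt_zero.trans_le n.cast_nonneg) one_pos hc
  refine h.congr_fun (fun x _ ↦ ?_) measurableSet_Ioi
  simp [mul_comm]

theorem integral_exp_neg_mul_pow (n : ℕ) : ∫ x in Ioi 0, exp (-x) * x ^ n = n.factorial := by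
  rw [← Real.Gamma_nat_eq_factorial, Real.Gamma_eq_integral (by positivity)]
  refine setIntegral_congr_fun measurableSet_Ioi fun x _ ↦ ?_
  simp [← Real.rpow_natCast]

theorem laguerre_eq_sum (n : ℕ) (x : ℝ) :
    laguerre n x = ∑ i ∈ range (n + 1), (-1) ^ i * n.choose i / i.factorial * x ^ i :=
  sum_congr rfl fun _ _ ↦ by ring

theorem exp_neg_mul_pow_mul_laguerre (j n : ℕ) (t : ℝ) :
    exp (-t) * t ^ j * laguerre n t
      = ∑ i ∈ range (n + 1), (-1) ^ i * n.choose i / i.factorial * (exp (-t) * t ^ (i + j)) := by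
  rw [laguerre_eq_sum, mul_sum]
  exact sum_congr rfl fun _ _ ↦ by ring

theorem integrableOn_exp_neg_mul_pow' (n : ℕ) :
    IntegrableOn (fun t ↦ exp (-t) * t ^ n) (Ioi 0) := by
  simpa using integrableOn_exp_neg_mul_pow one_pos n

theorem integrableOn_exp_neg_mul_pow_mul_laguerre (j n : ℕ) :
    IntegrableOn (fun t ↦ exp (-t) * t ^ j * laguerre n t) (Ioi 0) := by
  simp_rw [exp_neg_mul_pow_mul_laguerre]
  exact integrable_finsetSum _ fun i _ ↦ (integrableOn_exp_neg_mul_pow' (i + j)).const_mul _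

theorem integral_exp_neg_mul_pow_mul_laguerre (j n : ℕ) :
    ∫ t in Ioi 0, exp (-t) * t ^ j * laguerre n t = (-1) ^ n * j.factorial * j.choose n := by
  simp_rw [exp_neg_mul_pow_mul_laguerre]
  rw [integral_finsetSum _ fun i _ ↦ (integrableOn_exp_neg_mul_pow' (i + j)).const_mul _]
  simp_rw [integral_const_mul, integral_exp_neg_mul_pow]
  have hfact (i : ℕ) : ((i + j).factorial : ℝ) / i.factorial = j.factorial * (i + j).choose j := by
    rw [← Nat.add_choose_mul_factorial_mul_factorial i j]
    push_cast
    field_simp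
  have hbinom := congrArg (Int.cast : ℤ → ℝ) (sum_neg_one_pow_mul_choose_mul_choose_add n j)
  push_cast at hbinom
  rw [mul_right_comm, ← hbinom, sum_mul]
  refine sum_congr rfl fun i _ ↦ ?_
  rw [div_mul_eq_mul_div, mul_div_assoc, hfact]
  ring

theorem exp_neg_mul_laguerre_mul_laguerre (m n : ℕ) (t : ℝ) :
    exp (-t) * (laguerre m t * laguerre n t)
      = ∑ j ∈ range (m + 1),
          (-1) ^ j * m.choose j / j.factorial * (exp (-t) * t ^ j * laguerre n t) := by
  rw [laguerre_eq_sum m, sum_mul, mul_sum]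
  exact sum_congr rfl fun _ _ ↦ by ring

theorem integrableOn_exp_neg_mul_laguerre_mul_laguerre (m n : ℕ) :
    IntegrableOn (fun t ↦ exp (-t) * (laguerre m t * laguerre n t)) (Ioi 0) := by
  simp_rw [exp_neg_mul_laguerre_mul_laguerre]
  exact integrable_finsetSum _ fun j _ ↦
    (integrableOn_exp_neg_mul_pow_mul_laguerre j n).const_mul _

theorem integral_exp_neg_mul_laguerre_mul_laguerre (m n : ℕ) :
    ∫ t in Ioi 0, exp (-t) * (laguerre m t * laguerre n t) = if m = n then 1 else 0 := by
  simp_rw [exp_neg_mul_laguerre_mul_laguerre]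
  rw [integral_finsetSum _ fun j _ ↦ (integrableOn_exp_neg_mul_pow_mul_laguerre j n).const_mul _]
  simp_rw [integral_const_mul, integral_exp_neg_mul_pow_mul_laguerre]
  have hbinom := congrArg (Int.cast : ℤ → ℝ) (sum_neg_one_pow_mul_choose_mul_choose m n)
  push_cast at hbinom
  have hfact (j : ℕ) : (j.factorial : ℝ) ≠ 0 := by positivity
  calc ∑ j ∈ range (m + 1),
        (-1 : ℝ) ^ j * m.choose j / j.factorial * ((-1) ^ n * j.factorial * j.choose n)
      = (-1) ^ n * ∑ j ∈ range (m + 1), (-1 : ℝ) ^ j * m.choose j * j.choose n := by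
        rw [mul_sum]
        refine sum_congr rfl fun j _ ↦ ?_
        field_simp
    _ = if m = n then 1 else 0 := by
        rw [hbinom]
        split_ifs with h
        · rw [h, ← pow_add, ← two_mul, pow_mul, neg_one_sq, one_pow]
        · rw [mul_zero]

theorem exp_half_mul_exp_half (y : ℝ) : exp (y / 2) * exp (y / 2) = exp y := by
  rw [← exp_add, add_halves]

/-- The paper's orthonormal system `L_k^*(x, s) = (-1)ᵏ √s L_k(sx)` in `L²(0,∞; e^{-sx})`, carried
to the unweighted `L²(0,∞)` by the factor `e^{-sx/2}`. -/
noncomputable def laguerreFun (s : ℝ) (k : ℕ) (x : ℝ) : ℝ :=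
  (-1) ^ k * √s * exp (-(s * x) / 2) * laguerre k (s * x)

theorem laguerreFun_mul_laguerreFun {s : ℝ} (hs : 0 ≤ s) (k l : ℕ) (x : ℝ) :
    laguerreFun s k x * laguerreFun s l x
      = (-1) ^ (k + l) * s * (exp (-(s * x)) * (laguerre k (s * x) * laguerre l (s * x))) := by
  calc laguerreFun s k x * laguerreFun s l x
      = (-1) ^ (k + l) * (√s * √s) * (exp (-(s * x) / 2) * exp (-(s * x) / 2))
          * (laguerre k (s * x) * laguerre l (s * x)) := by
        rw [laguerreFun, laguerreFun, pow_add]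
        ring
    _ = _ := by
        rw [mul_self_sqrt hs, exp_half_mul_exp_half]
        ring

theorem continuous_laguerre (n : ℕ) : Continuous (laguerre n) := by
  unfold laguerre
  fun_prop

theorem memLp_laguerreFun {s : ℝ} (hs : 0 < s) (k : ℕ) :
    MemLp (laguerreFun s k) 2 (volume.restrict (Ioi 0)) := by
  have hcont : Continuous (laguerreFun s k) := by
    unfold laguerreFun
    have := continuous_laguerre k
    fun_prop
  refine (memLp_two_iff_integrable_sq hcont.aestronglyMeasurable).mpr ?_
  have hscaled := (integrableOn_Ioi_comp_mul_left_iff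
    (fun t ↦ exp (-t) * (laguerre k t * laguerre k t)) 0 hs).mpr
    (by simpa using integrableOn_exp_neg_mul_laguerre_mul_laguerre k k)
  refine IntegrableOn.congr_fun (hscaled.const_mul ((-1) ^ (k + k) * s)) (fun x _ ↦ ?_)
    measurableSet_Ioi
  rw [sq, laguerreFun_mul_laguerreFun hs.le]

theorem integral_laguerreFun_mul_laguerreFun {s : ℝ} (hs : 0 < s) (k l : ℕ) :
    ∫ x in Ioi 0, laguerreFun s k x * laguerreFun s l x = if k = l then 1 else 0 := by
  simp_rw [laguerreFun_mul_laguerreFun hs.le]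
  rw [integral_const_mul, integral_comp_mul_left_Ioi
    (fun t ↦ exp (-t) * (laguerre k t * laguerre l t)) 0 hs, mul_zero,
    integral_exp_neg_mul_laguerre_mul_laguerre, smul_eq_mul]
  split_ifs with h
  · rw [h, ← two_mul, pow_mul, neg_one_sq, one_pow, one_mul, mul_one, mul_inv_cancel₀ hs.ne']
  · rw [mul_zero, mul_zero]

section

variable {f : ℝ → ℝ} {M r s : ℝ}

theorem integrableOn_exp_neg_mul_pow_mul_of_abs_le
    (hf : AEStronglyMeasurable f (volume.restrict (Ioi 0)))
    (hbound : ∀ x ≥ (0 : ℝ), |f x| ≤ M * exp (r * x)) (hrs : r < s) (n : ℕ) :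
    IntegrableOn (fun x ↦ exp (-(s * x)) * x ^ n * f x) (Ioi 0) := by
  refine Integrable.mono' ((integrableOn_exp_neg_mul_pow (sub_pos.mpr hrs) n).const_mul M)
    ((by fun_prop : Continuous fun x : ℝ ↦ exp (-(s * x)) * x ^ n).aestronglyMeasurable.mul hf) ?_
  rw [ae_restrict_iff' measurableSet_Ioi]
  refine Filter.Eventually.of_forall fun x (hx : 0 < x) ↦ ?_
  have hweight : 0 ≤ exp (-(s * x)) * x ^ n := by positivity
  calc ‖exp (-(s * x)) * x ^ n * f x‖ = exp (-(s * x)) * x ^ n * |f x| := by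
        rw [norm_mul, Real.norm_of_nonneg hweight, Real.norm_eq_abs]
    _ ≤ exp (-(s * x)) * x ^ n * (M * exp (r * x)) :=
        mul_le_mul_of_nonneg_left (hbound x hx.le) hweight
    _ = M * (exp (-((s - r) * x)) * x ^ n) := by
        rw [show -((s - r) * x) = -(s * x) + r * x by ring, exp_add]
        ring

theorem memLp_exp_neg_half_mul_mul_of_abs_le
    (hf : AEStronglyMeasurable f (volume.restrict (Ioi 0)))
    (hbound : ∀ x ≥ (0 : ℝ), |f x| ≤ M * exp (r * x)) (hrs : 2 * r < s) :
    MemLp (fun x ↦ exp (-(s * x) / 2) * f x) 2 (volume.restrict (Ioi 0)) := by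
  refine (memLp_two_iff_integrable_sq
    ((by fun_prop : Continuous fun x : ℝ ↦ exp (-(s * x) / 2)).aestronglyMeasurable.mul hf)).mpr ?_
  have hbound_sq (x : ℝ) (hx : x ≥ 0) : |f x ^ 2| ≤ M ^ 2 * exp (2 * r * x) := by
    calc |f x ^ 2| = |f x| ^ 2 := abs_pow _ _
      _ ≤ (M * exp (r * x)) ^ 2 := pow_le_pow_left₀ (abs_nonneg _) (hbound x hx) 2
      _ = M ^ 2 * exp (2 * r * x) := by
        rw [mul_pow, ← exp_nat_mul]
        push_cast
        ring_nf
  refine (integrableOn_exp_neg_mul_pow_mul_of_abs_le (hf.pow 2) hbound_sq hrs 0).congr_fun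
    (fun x _ ↦ ?_) measurableSet_Ioi
  show exp (-(s * x)) * x ^ 0 * f x ^ 2 = (exp (-(s * x) / 2) * f x) ^ 2
  rw [mul_pow, sq (exp _), exp_half_mul_exp_half, pow_zero, mul_one]

theorem integral_exp_neg_mul_mul_laguerre
    (hint : ∀ j : ℕ, IntegrableOn (fun x ↦ exp (-(s * x)) * x ^ j * f x) (Ioi 0)) (k : ℕ) :
    ∫ x in Ioi 0, exp (-(s * x)) * f x * laguerre k (s * x)
      = ∑ j ∈ range (k + 1),
          (-1) ^ j * k.choose j
            * (s ^ j * ∫ x in Ioi 0, exp (-(s * x)) * (x ^ j / j.factorial) * f x) := by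
  have hterm (j : ℕ) :
      IntegrableOn (fun x ↦ exp (-(s * x)) * (x ^ j / j.factorial) * f x) (Ioi 0) :=
    IntegrableOn.congr_fun ((hint j).div_const (j.factorial : ℝ)) (fun x _ ↦ by ring)
      measurableSet_Ioi
  have hexpand (x : ℝ) : exp (-(s * x)) * f x * laguerre k (s * x)
      = ∑ j ∈ range (k + 1),
          (-1) ^ j * k.choose j * s ^ j * (exp (-(s * x)) * (x ^ j / j.factorial) * f x) := by
    rw [laguerre_eq_sum, mul_sum]
    exact sum_congr rfl fun j _ ↦ by rw [mul_pow]; ring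
  simp_rw [hexpand]
  rw [integral_finsetSum _ fun j _ ↦ (hterm j).const_mul _]
  exact sum_congr rfl fun j _ ↦ by rw [integral_const_mul, mul_assoc]

theorem fwd_iterate_pow_mul_moment_eq_integral_laguerre
    (hint : ∀ j : ℕ, IntegrableOn (fun x ↦ exp (-(s * x)) * x ^ j * f x) (Ioi 0)) (k : ℕ) :
    fwd^[k] (fun n ↦ s ^ n * ∫ x in Ioi 0, exp (-(s * x)) * (x ^ n / n.factorial) * f x) 0
      = (-1) ^ k * ∫ x in Ioi 0, exp (-(s * x)) * f x * laguerre k (s * x) := by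
  rw [integral_exp_neg_mul_mul_laguerre hint, sum_neg_one_pow_mul_choose_mul, ← mul_assoc,
    ← mul_pow, neg_one_mul, neg_neg, one_pow, one_mul, fwd_eq_fwdDiff]

theorem integral_laguerreFun_mul_exp_neg_half_mul (k : ℕ) :
    ∫ x in Ioi 0, laguerreFun s k x * (exp (-(s * x) / 2) * f x)
      = (-1) ^ k * √s * ∫ x in Ioi 0, exp (-(s * x)) * f x * laguerre k (s * x) := by
  rw [← integral_const_mul]
  refine setIntegral_congr_fun measurableSet_Ioi fun x _ ↦ ?_
  rw [laguerreFun, ← exp_half_mul_exp_half (-(s * x))]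
  ring

end

theorem laplace_type_seq_in_Sc_general (f : ℝ → ℝ) (M r s : ℝ)
    (hf : Measurable f) (hr : 0 < r)
    (hbound : ∀ x ≥ (0:ℝ), |f x| ≤ M * Real.exp (r * x))
    (hs : 2 * r < s)
    (φ a : ℕ → ℝ → ℝ)
    (hφ : ∀ n, φ n s = ∫ x in Set.Ioi (0:ℝ),
        Real.exp (-(s*x)) * (x ^ n / n.factorial) * f x)
    (ha : ∀ k, a k s = (-1:ℝ) ^ k * Real.sqrt s * ∫ x in Set.Ioi (0:ℝ),
        Real.exp (-(s*x)) * f x * laguerre k (s * x)) :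
    (∀ k : ℕ,
      fwd^[k] (fun n => s ^ n * φ n s) 0
        = ∑ j ∈ range (k + 1), (-1:ℝ) ^ (k - j) * (k.choose j : ℝ) * s ^ j * φ j s
      ∧ fwd^[k] (fun n => s ^ n * φ n s) 0 = a k s / Real.sqrt s) ∧
    Summable (fun k : ℕ => (fwd^[k] (fun n => s ^ n * φ n s) 0) ^ 2) ∧
    (∑' k : ℕ, (fwd^[k] (fun n => s ^ n * φ n s) 0) ^ 2)
      ≤ (1 / s) * ∫ x in Set.Ioi (0:ℝ), Real.exp (-(s*x)) * (f x) ^ 2 := by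
  have hs0 : 0 < s := by linarith
  have hint := integrableOn_exp_neg_mul_pow_mul_of_abs_le hf.aestronglyMeasurable hbound
    (by linarith : r < s)
  have hcoef (k : ℕ) : fwd^[k] (fun n ↦ s ^ n * φ n s) 0 = a k s / √s := by
    simp_rw [hφ, fwd_iterate_pow_mul_moment_eq_integral_laguerre hint, ha]
    rw [mul_div_right_comm, mul_div_cancel_right₀ _ (sqrt_ne_zero'.mpr hs0)]
  have hsq (k : ℕ) : (fwd^[k] (fun n ↦ s ^ n * φ n s) 0) ^ 2
      = 1 / s * (∫ x in Ioi 0, laguerreFun s k x * (exp (-(s * x) / 2) * f x)) ^ 2 := by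
    rw [hcoef, ha, integral_laguerreFun_mul_exp_neg_half_mul, div_pow, mul_pow, sq_sqrt hs0.le]
    ring
  have hweighted_sq (x : ℝ) : (exp (-(s * x) / 2) * f x) ^ 2 = exp (-(s * x)) * f x ^ 2 := by
    rw [mul_pow, sq (exp _), exp_half_mul_exp_half]
  obtain ⟨hsum, hle⟩ := summable_and_tsum_sq_integral_mul_le
    (memLp_exp_neg_half_mul_mul_of_abs_le hf.aestronglyMeasurable hbound hs)
    (memLp_laguerreFun hs0) (integral_laguerreFun_mul_laguerreFun hs0)
  simp_rw [hweighted_sq] at hle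
  simp_rw [hsq, tsum_mul_left]
  refine ⟨fun k ↦ ⟨?_, hcoef k⟩, hsum.mul_left _, mul_le_mul_of_nonneg_left hle (by positivity)⟩
  rw [fwd_iterate_apply_zero]
  exact sum_congr rfl fun j _ ↦ by ring

theorem laplace_type_seq_in_Sc (f : ℝ → ℝ) (M r s : ℝ)
    (hf : Measurable f) (hM : 0 < M) (hr : 0 < r)
    (hbound : ∀ x ≥ (0:ℝ), |f x| ≤ M * Real.exp (r * x))
    (hs : 2 * r < s)
    (φ a : ℕ → ℝ → ℝ)
    (hφ : ∀ n, φ n s = ∫ x in Set.Ioi (0:ℝ),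
        Real.exp (-(s*x)) * (x ^ n / n.factorial) * f x)
    (ha : ∀ k, a k s = (-1:ℝ) ^ k * Real.sqrt s * ∫ x in Set.Ioi (0:ℝ),
        Real.exp (-(s*x)) * f x * laguerre k (s * x)) :
    (∀ k : ℕ,
      fwd^[k] (fun n => s ^ n * φ n s) 0
        = ∑ j ∈ range (k + 1), (-1:ℝ) ^ (k - j) * (k.choose j : ℝ) * s ^ j * φ j s
      ∧ fwd^[k] (fun n => s ^ n * φ n s) 0 = a k s / Real.sqrt s) ∧
    Summable (fun k : ℕ => (fwd^[k] (fun n => s ^ n * φ n s) 0) ^ 2) ∧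
    (∑' k : ℕ, (fwd^[k] (fun n => s ^ n * φ n s) 0) ^ 2)
      ≤ (1 / s) * ∫ x in Set.Ioi (0:ℝ), Real.exp (-(s*x)) * (f x) ^ 2 :=
  laplace_type_seq_in_Sc_general f M r s hf hr hbound hs φ a hφ ha
end

section
/- Let f be p-times continuously differentiable with f and its derivatives of exponential order r, and φₙ(s) = ∫₀^∞ e^{-s t}(tⁿ/n!) f(t) dt. Then for n ≥ p and s > r, ∫₀^∞ e^{-s t}(tⁿ/n!) f⁽ᵖ⁾(t) dt = ∇ₛᵖφₙ(s) = Σ_{k=0}^{p}(-1)^k C(p,k) s^{p-k} φ_{n-k}(s). -/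
/-!
The kernel `Kₙ(t) = e^{-st} tⁿ / n!` satisfies `K'ₙ₊₁ = Kₙ - s Kₙ₊₁` and `Kₙ₊₁(0) = 0`. Hence one
integration by parts, whose boundary term at infinity vanishes because `s` exceeds the exponential
order, gives `φₙ₊₁[g'](s) = s φₙ₊₁[g](s) - φₙ[g](s)`: the moments of `g'` are `∇ₛ` of those of `g`.
Iterating `p` times and expanding `∇ₛ = s - (shift)` by the binomial theorem gives the formula.
-/

open MeasureTheory Real Finset Filter Set Topology

noncomputable def momentKernel (n : ℕ) (s t : ℝ) : ℝ := exp (-(s * t)) * (t ^ n / n.factorial)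

/-- `φₙ(s)` of `g`. -/
noncomputable def laplaceMoment (g : ℝ → ℝ) (n : ℕ) (s : ℝ) : ℝ :=
  ∫ t in Ioi 0, momentKernel n s t * g t

lemma momentKernel_nonneg (n : ℕ) (s : ℝ) {t : ℝ} (ht : 0 ≤ t) : 0 ≤ momentKernel n s t := by
  unfold momentKernel; positivity

lemma continuous_momentKernel (n : ℕ) (s : ℝ) : Continuous (momentKernel n s) := by
  unfold momentKernel; fun_prop

lemma momentKernel_succ_zero (n : ℕ) (s : ℝ) : momentKernel (n + 1) s 0 = 0 := by
  simp [momentKernel]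

lemma hasDerivAt_momentKernel_succ (n : ℕ) (s t : ℝ) :
    HasDerivAt (momentKernel (n + 1) s) (momentKernel n s t - s * momentKernel (n + 1) s t) t := by
  have hexp : HasDerivAt (fun t => exp (-(s * t))) (-s * exp (-(s * t))) t := by
    simpa [mul_comm] using ((hasDerivAt_id t).const_mul s).neg.exp
  have hpow : HasDerivAt (fun t : ℝ => t ^ (n + 1) / (n + 1).factorial)
      (t ^ n / n.factorial) t := by
    refine ((hasDerivAt_pow (n + 1) t).div_const _).congr_deriv ?_
    rw [Nat.factorial_succ, Nat.add_sub_cancel]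
    push_cast
    field_simp
  refine (hexp.mul hpow).congr_deriv ?_
  simp only [momentKernel]
  ring

lemma momentKernel_mul_exp (n : ℕ) (s r t : ℝ) :
    momentKernel n s t * exp (r * t) = momentKernel n (s - r) t := by
  simp only [momentKernel]
  rw [mul_right_comm, ← exp_add]
  ring_nf

lemma integrableOn_momentKernel (n : ℕ) {b : ℝ} (hb : 0 < b) :
    IntegrableOn (momentKernel n b) (Ioi 0) := by
  have h : IntegrableOn (fun t : ℝ => t ^ (n : ℝ) * exp (-b * t ^ (1 : ℝ)) / n.factorial) (Ioi 0) :=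
    Integrable.div_const (integrableOn_rpow_mul_exp_neg_mul_rpow
      (by linarith [(n.cast_nonneg : (0 : ℝ) ≤ n)]) one_pos hb) _
  refine h.congr_fun (fun t ht => ?_) measurableSet_Ioi
  simp only [rpow_natCast, rpow_one, momentKernel]
  ring_nf

lemma tendsto_momentKernel_atTop (n : ℕ) {b : ℝ} (hb : 0 < b) :
    Tendsto (momentKernel n b) atTop (𝓝 0) := by
  have h := (tendsto_rpow_mul_exp_neg_mul_atTop_nhds_zero n b hb).div_const (n.factorial : ℝ)
  rw [zero_div] at h
  refine h.congr' ?_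
  filter_upwards [eventually_ge_atTop 0] with t ht
  simp only [rpow_natCast, momentKernel]
  ring_nf

section ExponentialOrder

variable {g : ℝ → ℝ} {M r s : ℝ}

lemma abs_momentKernel_mul_le (hg : ∀ t ≥ 0, |g t| ≤ M * exp (r * t)) (n : ℕ) {t : ℝ}
    (ht : 0 ≤ t) :
    |momentKernel n s t * g t| ≤ M * momentKernel n (s - r) t := by
  rw [abs_mul, abs_of_nonneg (momentKernel_nonneg n s ht), ← momentKernel_mul_exp, mul_left_comm]
  exact mul_le_mul_of_nonneg_left (hg t ht) (momentKernel_nonneg n s ht)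

lemma integrableOn_momentKernel_mul (hg_cont : Continuous g)
    (hg : ∀ t ≥ 0, |g t| ≤ M * exp (r * t)) (hrs : r < s) (n : ℕ) :
    IntegrableOn (fun t => momentKernel n s t * g t) (Ioi 0) := by
  refine ((integrableOn_momentKernel n (sub_pos.2 hrs)).const_mul M).mono' ?_ ?_
  · exact ((continuous_momentKernel n s).mul hg_cont).aestronglyMeasurable
  · filter_upwards [ae_restrict_mem measurableSet_Ioi] with t ht
    exact abs_momentKernel_mul_le hg n ht.le

lemma tendsto_momentKernel_mul_atTop (hg : ∀ t ≥ 0, |g t| ≤ M * exp (r * t)) (hrs : r < s)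
    (n : ℕ) : Tendsto (fun t => momentKernel n s t * g t) atTop (𝓝 0) := by
  have h := (tendsto_momentKernel_atTop n (sub_pos.2 hrs)).const_mul M
  rw [mul_zero] at h
  refine squeeze_zero_norm' ?_ h
  filter_upwards [eventually_ge_atTop 0] with t ht
  exact abs_momentKernel_mul_le hg n ht

lemma laplaceMoment_deriv {M' : ℝ} (hg_diff : Differentiable ℝ g) (hg'_cont : Continuous (deriv g))
    (hg : ∀ t ≥ 0, |g t| ≤ M * exp (r * t)) (hg' : ∀ t ≥ 0, |deriv g t| ≤ M' * exp (r * t))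
    (hrs : r < s) (n : ℕ) :
    laplaceMoment (deriv g) (n + 1) s = s * laplaceMoment g (n + 1) s - laplaceMoment g n s := by
  have hK := integrableOn_momentKernel_mul hg_diff.continuous hg hrs
  have hsplit : ∫ t in Ioi 0, (momentKernel n s t - s * momentKernel (n + 1) s t) * g t =
      laplaceMoment g n s - s * laplaceMoment g (n + 1) s := by
    unfold laplaceMoment
    rw [← integral_const_mul, ← integral_sub (hK n) ((hK (n + 1)).const_mul s)]
    refine setIntegral_congr_fun measurableSet_Ioi fun t _ => ?_
    ring
  have hboundary : Tendsto (fun t => momentKernel (n + 1) s t * g t) (𝓝[>] 0) (𝓝 0) := by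
    have h := ((continuous_momentKernel (n + 1) s).mul hg_diff.continuous).tendsto 0
    rw [Pi.mul_apply, momentKernel_succ_zero, zero_mul] at h
    exact h.mono_left nhdsWithin_le_nhds
  have hibp := integral_Ioi_mul_deriv_eq_deriv_mul
    (fun t _ => hasDerivAt_momentKernel_succ n s t) (fun t _ => (hg_diff t).hasDerivAt)
    (integrableOn_momentKernel_mul hg'_cont hg' hrs (n + 1))
    (((hK n).sub ((hK (n + 1)).const_mul s)).congr_fun
      (fun t _ => by simp only [Pi.sub_apply, Pi.mul_apply]; ring) measurableSet_Ioi)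
    hboundary (tendsto_momentKernel_mul_atTop hg hrs (n + 1))
  rw [laplaceMoment, hibp, hsplit]
  ring

end ExponentialOrder

/-- `∇ₛ φₙ = s φₙ - φₙ₋₁`; at `n = 0` it reads `s φ₀ - φ₀`, as `0 - 1 = 0` in `ℕ`. -/
noncomputable def backwardDiff (s : ℝ) : Module.End ℝ (ℕ → ℝ) :=
  s • 1 - LinearMap.funLeft ℝ ℝ Nat.pred

lemma backwardDiff_apply (s : ℝ) (φ : ℕ → ℝ) (n : ℕ) :
    backwardDiff s φ n = s * φ n - φ (n - 1) := rfl

lemma funLeft_pred_pow_apply (k : ℕ) (φ : ℕ → ℝ) (n : ℕ) :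
    (LinearMap.funLeft ℝ ℝ Nat.pred ^ k) φ n = φ (n - k) := by
  induction k generalizing n with
  | zero => rfl
  | succ k ih =>
    rw [pow_succ', Module.End.mul_apply, LinearMap.funLeft_apply, ih, Nat.pred_eq_sub_one]
    congr 1
    omega

lemma backwardDiff_pow_apply (s : ℝ) (p : ℕ) (φ : ℕ → ℝ) (n : ℕ) :
    (backwardDiff s ^ p) φ n =
      ∑ k ∈ range (p + 1), (-1) ^ k * (p.choose k : ℝ) * s ^ (p - k) * φ (n - k) := by
  have hcomm : Commute (-LinearMap.funLeft ℝ ℝ Nat.pred) (s • 1 : Module.End ℝ (ℕ → ℝ)) :=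
    ((Commute.one_right _).smul_right s)
  rw [backwardDiff, sub_eq_neg_add, hcomm.add_pow, LinearMap.sum_apply, Finset.sum_apply]
  refine Finset.sum_congr rfl fun k _ => ?_
  rw [← neg_one_smul ℝ (LinearMap.funLeft ℝ ℝ Nat.pred), smul_pow, smul_pow, one_pow]
  simp only [Module.End.mul_apply, LinearMap.smul_apply, Module.End.one_apply,
    Module.End.natCast_apply, Pi.smul_apply, funLeft_pred_pow_apply, smul_eq_mul, nsmul_eq_mul,
    Pi.mul_apply, Pi.natCast_apply]
  ring

lemma laplaceMoment_iteratedDeriv {f : ℝ → ℝ} {p : ℕ} {M r s : ℝ} (hf : ContDiff ℝ p f)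
    (hbound : ∀ j ≤ p, ∀ t ≥ 0, |iteratedDeriv j f t| ≤ M * exp (r * t)) (hrs : r < s)
    {n : ℕ} (hn : p ≤ n) :
    laplaceMoment (iteratedDeriv p f) n s = (backwardDiff s ^ p) (laplaceMoment f · s) n := by
  induction p generalizing n with
  | zero => rfl
  | succ p ih =>
    obtain ⟨m, rfl⟩ := Nat.exists_eq_add_of_le' (Nat.one_le_of_lt hn)
    have hfp : ContDiff ℝ p f := hf.of_le (by exact_mod_cast p.le_succ)
    have hbound_p : ∀ j ≤ p, ∀ t ≥ 0, |iteratedDeriv j f t| ≤ M * exp (r * t) :=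
      fun j hj => hbound j (hj.trans p.le_succ)
    have hstep := laplaceMoment_deriv (hf.differentiable_iteratedDeriv p (by norm_cast; omega))
      (by rw [← iteratedDeriv_succ]; exact hf.continuous_iteratedDeriv (p + 1) le_rfl)
      (hbound p p.le_succ) (by rw [← iteratedDeriv_succ]; exact hbound (p + 1) le_rfl) hrs m
    rw [iteratedDeriv_succ, hstep, ih hfp hbound_p (by omega), ih hfp hbound_p (by omega),
      pow_succ', Module.End.mul_apply, backwardDiff_apply, Nat.add_sub_cancel]

theorem laplace_type_of_deriv_general (f : ℝ → ℝ) (p : ℕ) (M r : ℝ)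
    (hf : ContDiff ℝ p f)
    (hbound : ∀ j ≤ p, ∀ t ≥ (0:ℝ), |iteratedDeriv j f t| ≤ M * Real.exp (r * t))
    (φ : ℕ → ℝ → ℝ)
    (hφ : ∀ n s, φ n s = ∫ t in Set.Ioi (0:ℝ),
        Real.exp (-(s*t)) * (t ^ n / n.factorial) * f t) :
    ∀ s > r, ∀ n : ℕ, p ≤ n →
      (∫ t in Set.Ioi (0:ℝ),
          Real.exp (-(s*t)) * (t ^ n / n.factorial) * iteratedDeriv p f t)
        = ∑ k ∈ range (p + 1),
            (-1:ℝ) ^ k * (p.choose k : ℝ) * s ^ (p - k) * φ (n - k) s := by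
  obtain rfl : φ = fun n s => laplaceMoment f n s := funext₂ hφ
  intro s hs n hn
  exact (laplaceMoment_iteratedDeriv hf hbound hs hn).trans (backwardDiff_pow_apply s p _ n)

theorem laplace_type_of_deriv (f : ℝ → ℝ) (p : ℕ) (M r : ℝ)
    (hf : ContDiff ℝ p f) (hM : 0 < M) (hr : 0 < r)
    (hbound : ∀ j ≤ p, ∀ t ≥ (0:ℝ), |iteratedDeriv j f t| ≤ M * Real.exp (r * t))
    (φ : ℕ → ℝ → ℝ)
    (hφ : ∀ n s, φ n s = ∫ t in Set.Ioi (0:ℝ),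
        Real.exp (-(s*t)) * (t ^ n / n.factorial) * f t) :
    ∀ s > r, ∀ n : ℕ, p ≤ n →
      (∫ t in Set.Ioi (0:ℝ),
          Real.exp (-(s*t)) * (t ^ n / n.factorial) * iteratedDeriv p f t)
        = ∑ k ∈ range (p + 1),
            (-1:ℝ) ^ k * (p.choose k : ℝ) * s ^ (p - k) * φ (n - k) s :=
  laplace_type_of_deriv_general f p M r hf hbound φ hφ
end

section
/- For s > 0 and n ∈ ℕ, ∫₀^∞ e^{-s t}(tⁿ/n!) ln t dt = (Hₙ - γ - ln s)/s^{n+1}, where Hₙ = Σ_{k=1}^{n} 1/k is the n-th harmonic number and γ is the Euler–Mascheroni constant. -/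
/-!
Differentiating `∫₀^∞ t^(z-1) e^(-r t) dt = r^(-z) Γ(z)` in `z` (the Mellin transform of
`e^(-r t)` is holomorphic for `re z > 0`, and its derivative brings down a factor `log t`) gives
`∫₀^∞ t^(z-1) log t e^(-r t) dt = r^(-z) (Γ'(z) - log r Γ(z))`.
At `z = n + 1` we have `Γ(n+1) = n!` and `Γ'(n+1) = n! (Hₙ - γ)`.
-/

open MeasureTheory Real

open Asymptotics Filter Set Topology

section ExpNegMul

variable {r : ℝ} {z : ℂ}

lemma mellin_exp_neg_mul (hr : 0 < r) (hz : 0 < z.re) :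
    mellin (fun t : ℝ => Complex.exp (-(r * t))) z = (1 / r) ^ z * Complex.Gamma z := by
  simpa only [mellin, smul_eq_mul] using Complex.integral_cpow_mul_exp_neg_mul_Ioi hz hr

lemma hasDerivAt_mellin_exp_neg_mul (hr : 0 < r) (hz : 0 < z.re) :
    HasDerivAt (mellin fun t : ℝ => Complex.exp (-(r * t)))
      (mellin (fun t : ℝ => Real.log t • Complex.exp (-(r * t))) z) z := by
  have hcont : Continuous fun t : ℝ => Complex.exp (-(r * t)) := by fun_prop
  refine (mellin_hasDerivAt_of_isBigO_rpow (a := z.re + 1) (b := 0)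
    (hcont.continuousOn.locallyIntegrableOn measurableSet_Ioi) ?_ (lt_add_one _) ?_ hz).2
  · have hexp : (fun t : ℝ => Complex.exp (-(r * t))) =O[atTop] fun t => Real.exp (-r * t) :=
      isBigO_of_le _ fun t => by simp [Complex.norm_exp]
    exact hexp.trans (isLittleO_exp_neg_mul_rpow_atTop hr _).isBigO
  · simp_rw [neg_zero, rpow_zero]
    exact (hcont.continuousAt.tendsto.mono_left nhdsWithin_le_nhds).isBigO_one ℝ

lemma mellin_log_smul_exp_neg_mul (hr : 0 < r) (hz : 0 < z.re) :
    mellin (fun t : ℝ => Real.log t • Complex.exp (-(r * t))) z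
      = (1 / r) ^ z * (deriv Complex.Gamma z - Real.log r * Complex.Gamma z) := by
  have hGamma : DifferentiableAt ℂ Complex.Gamma z :=
    Complex.differentiableAt_Gamma z fun m hm => by
      have hre := congrArg Complex.re hm
      simp only [Complex.neg_re, Complex.natCast_re] at hre
      linarith [m.cast_nonneg (α := ℝ)]
  have hpow :
      HasDerivAt (fun w : ℂ => (1 / r : ℂ) ^ w) ((1 / r : ℂ) ^ z * Complex.log (1 / r)) z :=
    (Complex.hasStrictDerivAt_const_cpow (Or.inl (by simpa using hr.ne'))).hasDerivAt
  have hmellin : (mellin fun t : ℝ => Complex.exp (-(r * t))) =ᶠ[𝓝 z]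
      fun w => (1 / r : ℂ) ^ w * Complex.Gamma w :=
    eventually_of_mem ((isOpen_lt continuous_const Complex.continuous_re).mem_nhds hz)
      fun w hw => mellin_exp_neg_mul hr hw
  rw [(hasDerivAt_mellin_exp_neg_mul hr hz).unique
      ((hpow.mul hGamma.hasDerivAt).congr_of_eventuallyEq hmellin),
    one_div, ← Complex.ofReal_inv, ← Complex.ofReal_log (inv_nonneg.2 hr.le), Real.log_inv]
  push_cast
  ring

end ExpNegMul

lemma mellin_ofReal_natCast_add_one (g : ℝ → ℝ) (n : ℕ) :
    mellin (fun t => (g t : ℂ)) (n + 1)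
      = ((∫ t in Ioi (0 : ℝ), t ^ n * g t : ℝ) : ℂ) := by
  rw [mellin, ← integral_complex_ofReal]
  refine setIntegral_congr_fun measurableSet_Ioi fun t _ => ?_
  rw [add_sub_cancel_right, Complex.cpow_natCast, smul_eq_mul]
  push_cast
  rfl

lemma integral_pow_mul_log_mul_exp_neg_mul_Ioi {r : ℝ} (hr : 0 < r) (n : ℕ) :
    ∫ t in Ioi (0 : ℝ), t ^ n * (Real.log t * Real.exp (-(r * t)))
      = n.factorial * (harmonic n - eulerMascheroniConstant - Real.log r) / r ^ (n + 1) := by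
  have hmellin := mellin_log_smul_exp_neg_mul hr (z := n + 1) (by
    simp only [Complex.add_re, Complex.natCast_re, Complex.one_re]
    positivity)
  have hofReal : (fun t : ℝ => Real.log t • Complex.exp (-(r * t)))
      = fun t => ((Real.log t * Real.exp (-(r * t)) : ℝ) : ℂ) := by
    ext t
    push_cast
    rw [Complex.real_smul]
  have hcpow : (1 / r : ℂ) ^ ((n : ℂ) + 1) = ((1 / r ^ (n + 1) : ℝ) : ℂ) := by
    rw [← Nat.cast_add_one, Complex.cpow_natCast]
    push_cast
    ring
  rw [hofReal, mellin_ofReal_natCast_add_one, hcpow, Complex.deriv_Gamma_nat,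
    Complex.Gamma_nat_eq_factorial] at hmellin
  apply Complex.ofReal_injective
  rw [hmellin]
  push_cast
  ring

theorem laplace_type_of_log (s : ℝ) (hs : 0 < s) (n : ℕ) :
    (∫ t in Set.Ioi (0:ℝ),
        Real.exp (-(s*t)) * (t ^ n / n.factorial) * Real.log t)
      = ((harmonic n : ℝ) - Real.eulerMascheroniConstant - Real.log s)
          / s ^ (n + 1) := by
  calc _ = (n.factorial : ℝ)⁻¹ *
          ∫ t in Ioi (0 : ℝ), t ^ n * (Real.log t * Real.exp (-(s * t))) := by
        rw [← integral_const_mul]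
        congr 1
        ext t
        field_simp
    _ = _ := by
        rw [integral_pow_mul_log_mul_exp_neg_mul_Ioi hs]
        field_simp
end
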